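/- With Δ(x) = Σ_{k=0}^{21} (−1)^k (b_k − b_{22}) cos(kx) − (820/33)(1 − cos(x/10)), where b_{2k} = b_{2k+1} = 4^{−k}·binomial(2k,k): Δ(x) > 0.90 for all x ∈ [2.908, 2.970]. -/

import Mathlib

open Real

noncomputable def b (k : ℕ) : ℝ := (Nat.choose (2*(k/2)) (k/2) : ℝ) / 4^(k/2)

noncomputable def Δ (x : ℝ) : ℝ :=
  (∑ k ∈ Finset.range 22, (-1)^k * (b k - b 22) * cos (k * x))
    - (820/33) * (1 - cos (x/10))

/-!
Since `∑ k |a_k| k + 82/33 ≤ 17` for the coefficients `a_k = (-1)^k (b_k - b_22)`, `Δ` is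
17-Lipschitz, so it suffices to bound `Δ` from below at five points with room to spare.
At a point `p`, `cos (k p) = T_k (cos p)`, and the recurrence `T_{k+2} = 2 X T_{k+1} - T_k`
amplifies an error in `cos p` by at most `3 ^ k`. Hence a rational `c` within `10⁻¹⁶` of
`cos p`, certified by the Taylor polynomial of `cos` at `p / 4` and `cos p = T_4 (cos (p / 4))`,
determines `Δ p` to within about `10⁻⁸` through the rational number `∑ a_k T_k(c)`, which is
computed exactly.
-/

open Polynomial Polynomial.Chebyshev Finset
open scoped Nat

theorem T_eval_natCast_add_two {R : Type*} [CommRing R] (c : R) (n : ℕ) :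
    (T R ↑(n + 2)).eval c = 2 * c * (T R ↑(n + 1)).eval c - (T R n).eval c := by
  push_cast
  simp [T_add_two]

theorem abs_eval_T_sub_eval_T_le {x y : ℝ} (hx : |x| ≤ 1) (hy : |y| ≤ 1) (n : ℕ) :
    |(T ℝ n).eval x - (T ℝ n).eval y| ≤ 3 ^ n * |x - y| := by
  induction n using Nat.twoStepInduction with
  | zero => simp
  | one => simpa using le_mul_of_one_le_left (abs_nonneg (x - y)) (by norm_num : (1 : ℝ) ≤ 3)
  | more n ih₀ ih₁ =>
    have hrec : (T ℝ ↑(n + 2)).eval x - (T ℝ ↑(n + 2)).eval y =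
        2 * x * ((T ℝ ↑(n + 1)).eval x - (T ℝ ↑(n + 1)).eval y)
          + 2 * (x - y) * (T ℝ ↑(n + 1)).eval y - ((T ℝ n).eval x - (T ℝ n).eval y) := by
      rw [T_eval_natCast_add_two, T_eval_natCast_add_two]
      ring
    have hT : |(T ℝ ↑(n + 1)).eval y| ≤ 1 := abs_eval_T_real_le_one _ hy
    rw [hrec]
    calc _ ≤ 2 * |x| * |(T ℝ ↑(n + 1)).eval x - (T ℝ ↑(n + 1)).eval y|
          + 2 * |x - y| * |(T ℝ ↑(n + 1)).eval y| + |(T ℝ n).eval x - (T ℝ n).eval y| := by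
          refine (abs_sub _ _).trans (add_le_add_left ((abs_add_le _ _).trans ?_) _)
          simp only [abs_mul, abs_two, le_refl]
      _ ≤ 2 * 1 * (3 ^ (n + 1) * |x - y|) + 2 * |x - y| * 1 + 3 ^ n * |x - y| := by
          gcongr
      _ ≤ 3 ^ (n + 2) * |x - y| := by
          have : |x - y| ≤ 3 ^ n * |x - y| :=
            le_mul_of_one_le_left (abs_nonneg _) (one_le_pow₀ (by norm_num))
          rw [show (3 : ℝ) ^ (n + 2) = 9 * 3 ^ n by ring,
            show (3 : ℝ) ^ (n + 1) = 3 * 3 ^ n by ring]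
          linarith

theorem abs_cos_nat_mul_sub_eval_T_le {x c ε : ℝ} (hc : |c| ≤ 1) (h : |cos x - c| ≤ ε)
    (n : ℕ) : |cos (n * x) - (T ℝ n).eval c| ≤ 3 ^ n * ε := by
  have := abs_eval_T_sub_eval_T_le (abs_cos_le_one x) hc n
  rw [T_real_cos, Int.cast_natCast] at this
  exact this.trans (by gcongr)

theorem abs_sum_mul_cos_sub_sum_mul_eval_T_le {x c ε : ℝ} (hc : |c| ≤ 1)
    (h : |cos x - c| ≤ ε) (a : ℕ → ℝ) (N : ℕ) :
    |∑ k ∈ range N, a k * cos (k * x) - ∑ k ∈ range N, a k * (T ℝ k).eval c| ≤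
      (∑ k ∈ range N, |a k| * 3 ^ k) * ε := by
  rw [← sum_sub_distrib, sum_mul]
  refine (abs_sum_le_sum_abs _ _).trans (sum_le_sum fun k _ => ?_)
  rw [← mul_sub, abs_mul, mul_assoc]
  gcongr
  exact abs_cos_nat_mul_sub_eval_T_le hc h k

theorem abs_sum_mul_cos_sub_sum_mul_cos_le (a : ℕ → ℝ) (N : ℕ) (x y : ℝ) :
    |∑ k ∈ range N, a k * cos (k * x) - ∑ k ∈ range N, a k * cos (k * y)| ≤
      (∑ k ∈ range N, |a k| * k) * |x - y| := by
  rw [← sum_sub_distrib, sum_mul]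
  refine (abs_sum_le_sum_abs _ _).trans (sum_le_sum fun k _ => ?_)
  rw [← mul_sub, abs_mul, mul_assoc]
  gcongr
  calc |cos (k * x) - cos (k * y)| ≤ |k * x - k * y| := abs_cos_sub_cos_le _ _
    _ = k * |x - y| := by rw [← mul_sub, abs_mul, Nat.abs_cast]

noncomputable def cosTaylor (x : ℝ) (n : ℕ) : ℝ :=
  ∑ i ∈ range n, (-1) ^ i * (x ^ (2 * i) / (2 * i)!)

theorem abs_cos_sub_cosTaylor_le {x : ℝ} (hx : x ^ 2 ≤ 2) (n : ℕ) :
    |cos x - cosTaylor x n| ≤ x ^ (2 * n) / (2 * n)! := by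
  set f : ℕ → ℝ := fun i => x ^ (2 * i) / (2 * i)!
  have hf : Antitone f := antitone_nat_of_succ_le fun i => by
    have h2i : ((2 * i + 2)! : ℝ) = (2 * i + 1) * (2 * i + 2) * (2 * i)! := by
      rw [Nat.factorial_succ, Nat.factorial_succ]
      push_cast
      ring
    simp only [f, show 2 * (i + 1) = 2 * i + 2 by ring, pow_add, h2i]
    have hx' : x ^ 2 ≤ (2 * i + 1) * (2 * i + 2) := by nlinarith [i.cast_nonneg (α := ℝ)]
    have hfac : (0 : ℝ) < (2 * i)! := mod_cast Nat.factorial_pos _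
    rw [div_le_div_iff₀ (by positivity) hfac]
    nlinarith [mul_le_mul_of_nonneg_left hx' (mul_nonneg ((even_two_mul i).pow_nonneg x) hfac.le)]
  have hs : Summable f :=
    (Real.summable_pow_div_factorial x).comp_injective fun i j h => by simpa using h
  have hcos : cos x = ∑' i, (-1) ^ i * f i := by
    simp only [f, ← mul_div_assoc]
    exact (Real.hasSum_cos x).tsum_eq.symm
  rw [hcos]
  exact alternating_series_error_bound f hf hs n

theorem abs_cos_sub_le_of_cosTaylor_div {x c : ℝ} {m : ℕ} (n : ℕ) (hm : m ≠ 0)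
    (hx : (x / m) ^ 2 ≤ 2) (hS : |cosTaylor (x / m) n| ≤ 1) :
    |cos x - c| ≤
      3 ^ m * ((x / m) ^ (2 * n) / (2 * n)!) + |(T ℝ m).eval (cosTaylor (x / m) n) - c| := by
  have h := abs_cos_nat_mul_sub_eval_T_le hS (abs_cos_sub_cosTaylor_le hx n) m
  rw [mul_div_cancel₀ x (Nat.cast_ne_zero.2 hm)] at h
  exact (abs_sub_le _ _ _).trans (add_le_add_left h _)

theorem abs_Δ_sub_Δ_le (x y : ℝ) : |Δ x - Δ y| ≤ 17 * |x - y| := by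
  have hsum := abs_sum_mul_cos_sub_sum_mul_cos_le (fun k => (-1) ^ k * (b k - b 22)) 22 x y
  have hcos : |cos (x / 10) - cos (y / 10)| ≤ |x - y| / 10 :=
    (abs_cos_sub_cos_le _ _).trans_eq (by rw [← sub_div, abs_div]; norm_num)
  have hL : ∑ k ∈ range 22, |(-1) ^ k * (b k - b 22)| * k + 820 / 33 / 10 ≤ 17 := by
    norm_num [sum_range_succ, b, Nat.choose]
  calc |Δ x - Δ y| = |(∑ k ∈ range 22, (-1) ^ k * (b k - b 22) * cos (k * x)
          - ∑ k ∈ range 22, (-1) ^ k * (b k - b 22) * cos (k * y))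
          + 820 / 33 * (cos (x / 10) - cos (y / 10))| := by
        congr 1
        unfold Δ
        ring
    _ ≤ (∑ k ∈ range 22, |(-1) ^ k * (b k - b 22)| * k) * |x - y|
          + 820 / 33 * (|x - y| / 10) := by
        refine (abs_add_le _ _).trans (add_le_add hsum ?_)
        rw [abs_mul, abs_of_pos (by norm_num : (0 : ℝ) < 820 / 33)]
        gcongr
    _ ≤ 17 * |x - y| := by linarith [mul_le_mul_of_nonneg_right hL (abs_nonneg (x - y))]

theorem lt_Δ_of_abs_sub_le {B p r x : ℝ} (hp : B + 17 * r < Δ p) (hx : |x - p| ≤ r) :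
    B < Δ x := by
  have := abs_le.1 (abs_Δ_sub_Δ_le x p)
  linarith

theorem Δ_ge_of_abs_cos_sub_le {x c ε : ℝ} (n : ℕ) (hc : |c| ≤ 1) (h : |cos x - c| ≤ ε)
    (hx : (x / 10) ^ 2 ≤ 2) :
    ∑ k ∈ range 22, (-1) ^ k * (b k - b 22) * (T ℝ k).eval c
      - (∑ k ∈ range 22, |(-1) ^ k * (b k - b 22)| * 3 ^ k) * ε
      - 820 / 33 * (1 - cosTaylor (x / 10) n + (x / 10) ^ (2 * n) / (2 * n)!) ≤ Δ x := by
  have h₁ := abs_le.1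
    (abs_sum_mul_cos_sub_sum_mul_eval_T_le hc h (fun k => (-1) ^ k * (b k - b 22)) 22)
  have h₂ := abs_le.1 (abs_cos_sub_cosTaylor_le hx n)
  unfold Δ
  linarith [h₁.1, h₂.1]

theorem lt_Δ_of_cosTaylor {B x c ε : ℝ} (hc : |c| ≤ 1) (hx : (x / 4) ^ 2 ≤ 2)
    (hS : |cosTaylor (x / 4) 10| ≤ 1)
    (hε : 3 ^ 4 * ((x / 4) ^ 20 / 20!) + |(T ℝ (4 : ℕ)).eval (cosTaylor (x / 4) 10) - c|
      ≤ ε)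
    (hB : B < ∑ k ∈ range 22, (-1) ^ k * (b k - b 22) * (T ℝ k).eval c
      - (∑ k ∈ range 22, |(-1) ^ k * (b k - b 22)| * 3 ^ k) * ε
      - 820 / 33 * (1 - cosTaylor (x / 10) 4 + (x / 10) ^ 8 / 8!)) :
    B < Δ x := by
  have h := (abs_cos_sub_le_of_cosTaylor_div (m := 4) 10 four_ne_zero (by exact_mod_cast hx)
    (by exact_mod_cast hS)).trans (by exact_mod_cast hε)
  exact hB.trans_le (Δ_ge_of_abs_cos_sub_le 4 hc h (by nlinarith))

-- Each `c` is `cos p` rounded to 17 decimals.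
theorem Δ_lower_bounds :
    0.90 + 17 * 0.0014 < Δ 2.9094 ∧ 0.90 + 17 * 0.0027 < Δ 2.9135 ∧
      0.90 + 17 * 0.0054 < Δ 2.9216 ∧ 0.90 + 17 * 0.0119 < Δ 2.9389 ∧
      0.90 + 17 * 0.0192 < Δ 2.97 := by
  refine ⟨lt_Δ_of_cosTaylor (c := -0.97316417910903130) (ε := 1e-16) ?_ ?_ ?_ ?_ ?_,
    lt_Δ_of_cosTaylor (c := -0.97409945576865597) (ε := 1e-16) ?_ ?_ ?_ ?_ ?_,
    lt_Δ_of_cosTaylor (c := -0.97589905250860143) (ε := 1e-16) ?_ ?_ ?_ ?_ ?_,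
    lt_Δ_of_cosTaylor (c := -0.97952807787386903) (ε := 1e-16) ?_ ?_ ?_ ?_ ?_,
    lt_Δ_of_cosTaylor (c := -0.98531406815788373) (ε := 1e-16) ?_ ?_ ?_ ?_ ?_⟩
  all_goals
    try simp only [sum_range_succ, sum_range_zero, T_eval_natCast_add_two]
    norm_num [cosTaylor, sum_range_succ, Nat.factorial, b, Nat.choose]

theorem lemma8_d : ∀ x ∈ Set.Icc (2.908 : ℝ) 2.970, Δ x > 0.90 := by
  obtain ⟨h₁, h₂, h₃, h₄, h₅⟩ := Δ_lower_bounds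
  rintro x ⟨hl, hu⟩
  rcases le_or_gt x 2.9108 with h | h
  · exact lt_Δ_of_abs_sub_le h₁ (abs_le.2 ⟨by linarith, by linarith⟩)
  rcases le_or_gt x 2.9162 with h | h
  · exact lt_Δ_of_abs_sub_le h₂ (abs_le.2 ⟨by linarith, by linarith⟩)
  rcases le_or_gt x 2.927 with h | h
  · exact lt_Δ_of_abs_sub_le h₃ (abs_le.2 ⟨by linarith, by linarith⟩)
  rcases le_or_gt x 2.9508 with h | h
  · exact lt_Δ_of_abs_sub_le h₄ (abs_le.2 ⟨by linarith, by linarith⟩)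
  · exact lt_Δ_of_abs_sub_le h₅ (abs_le.2 ⟨by linarith, by linarith⟩)
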